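/- Let P be a Frobenius toral poset with toral functional F_P. If B ∈ g(P) satisfies F_P([E_{p,p}, B]) = 0 for all p ∈ P, then E*_{p,q}(B) = 0 for every pair (p,q) such that E*_{p,q} is a summand of F_P. -/

import Mathlib

/-!
Common definitions: for a finite poset `P`, identified with `{1,…,n}` via a linear
extension, represented by a relation `le` on `Fin n`, the type-A Lie poset algebra
`gA le` is the Lie subalgebra of `sl(n, ℂ)` spanned by the matrix units `E p q`
for `p ≺ q` together with all trace-zero diagonal matrices (here realized as a
submodule of complex `n × n` matrices, which is closed under the commutator
bracket).  `gFull le` is the full Lie poset algebra `g(P)` (with all diagonal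
matrices).  `FS S` is the functional `F_S = ∑_{(p,q) ∈ S} E*_{p,q}`.
-/

namespace LiePosets

noncomputable section

open scoped BigOperators

/-- Complex `n × n` matrices. -/
abbrev M (n : ℕ) : Type := Matrix (Fin n) (Fin n) ℂ

/-- The strict relation `p ≺ q` attached to a poset relation `le`. -/
def Strict {n : ℕ} (le : Fin n → Fin n → Prop) (p q : Fin n) : Prop := le p q ∧ p ≠ q

/-- The type-A Lie poset algebra `g_A(P)`: trace-zero matrices supported on
relations of the poset (off-diagonal entries vanish off the strict relations). -/
def gA {n : ℕ} (le : Fin n → Fin n → Prop) : Submodule ℂ (M n) where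
  carrier := {A | Matrix.trace A = 0 ∧ ∀ p q : Fin n, p ≠ q → ¬ le p q → A p q = 0}
  add_mem' := by
    rintro A B ⟨hA, hA'⟩ ⟨hB, hB'⟩
    exact ⟨by simp [hA, hB], fun p q h1 h2 => by
      simp [Matrix.add_apply, hA' p q h1 h2, hB' p q h1 h2]⟩
  zero_mem' := ⟨by simp, fun p q _ _ => by simp⟩
  smul_mem' := by
    rintro c A ⟨hA, hA'⟩
    exact ⟨by simp [hA], fun p q h1 h2 => by
      simp [Matrix.smul_apply, hA' p q h1 h2]⟩

/-- The Lie poset algebra `g(P)` (all diagonal matrices allowed). -/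
def gFull {n : ℕ} (le : Fin n → Fin n → Prop) : Submodule ℂ (M n) where
  carrier := {A | ∀ p q : Fin n, p ≠ q → ¬ le p q → A p q = 0}
  add_mem' := by
    rintro A B hA hB p q h1 h2
    simp [Matrix.add_apply, hA p q h1 h2, hB p q h1 h2]
  zero_mem' := fun p q _ _ => by simp
  smul_mem' := by
    rintro c A hA p q h1 h2
    simp [Matrix.smul_apply, hA p q h1 h2]

/-- The functional `F_S = ∑_{(p,q) ∈ S} E*_{p,q}` reading off the sum of the
coefficients of the matrix entries indexed by `S`. -/
def FS {n : ℕ} (S : Finset (Fin n × Fin n)) : M n →ₗ[ℂ] ℂ where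
  toFun A := ∑ pq ∈ S, A pq.1 pq.2
  map_add' A B := by simp [Matrix.add_apply, Finset.sum_add_distrib]
  map_smul' c A := by simp [Matrix.smul_apply, Finset.mul_sum]

/-- `F` is a Frobenius functional on the Lie subalgebra (submodule) `g`:
the kernel of the Kirillov form `B_F(x, y) = F ⁅x, y⁆` on `g` is trivial. -/
def IsFrobeniusOn {n : ℕ} (g : Submodule ℂ (M n)) (F : M n →ₗ[ℂ] ℂ) : Prop :=
  ∀ x ∈ g, (∀ y ∈ g, F ⁅x, y⁆ = 0) → x = 0

/-- `H` is a principal element for `F` on `g`:  `B_F(H, ·) = F` on `g`. -/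
def IsPrincipal {n : ℕ} (g : Submodule ℂ (M n)) (F : M n →ₗ[ℂ] ℂ) (H : M n) : Prop :=
  H ∈ g ∧ ∀ y ∈ g, F ⁅H, y⁆ = F y

/-- The adjoint action `ad H = ⁅H, -⁆` as a linear endomorphism of matrices. -/
def adE {n : ℕ} (H : M n) : Module.End ℂ (M n) :=
  LinearMap.mulLeft ℂ H - LinearMap.mulRight ℂ H

/-- Multiplicity of `μ` as an eigenvalue of `ad H` acting on `g`. -/
def eigMult {n : ℕ} (g : Submodule ℂ (M n)) (H : M n) (μ : ℂ) : ℕ :=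
  Module.finrank ℂ ↥(g ⊓ Module.End.eigenspace (adE H) μ)

/-- `g` has a binary spectrum: for any Frobenius functional `F` and corresponding
principal element `H`, the multiset of eigenvalues of `ad H` on `g` consists of an
equal number of `0`'s and `1`'s. -/
def HasBinarySpectrum {n : ℕ} (g : Submodule ℂ (M n)) : Prop :=
  ∀ (F : M n →ₗ[ℂ] ℂ) (H : M n), IsFrobeniusOn g F → IsPrincipal g F H →
    eigMult g H 0 = eigMult g H 1 ∧
    eigMult g H 0 + eigMult g H 1 = Module.finrank ℂ ↥g

/-- The kernel of the Kirillov form `B_F` on `g`. -/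
def kirKer {n : ℕ} (g : Submodule ℂ (M n)) (F : M n →ₗ[ℂ] ℂ) : Submodule ℂ (M n) where
  carrier := {x | x ∈ g ∧ ∀ y ∈ g, F ⁅x, y⁆ = 0}
  zero_mem' := ⟨g.zero_mem, fun y _ => by rw [Ring.lie_def, zero_mul, mul_zero, sub_zero, map_zero]⟩
  add_mem' := by
    rintro a b ⟨ha, ha'⟩ ⟨hb, hb'⟩
    exact ⟨g.add_mem ha hb, fun y hy => by
      have h1 := ha' y hy
      have h2 := hb' y hy
      rw [Ring.lie_def] at h1 h2 ⊢
      rw [add_mul, mul_add, add_sub_add_comm, map_add, h1, h2, add_zero]⟩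
  smul_mem' := by
    rintro c a ⟨ha, ha'⟩
    exact ⟨g.smul_mem c ha, fun y hy => by
      have h1 := ha' y hy
      rw [Ring.lie_def] at h1 ⊢
      rw [smul_mul_assoc, mul_smul_comm, ← smul_sub, map_smul, h1, smul_zero]⟩

/-- The index of the Lie algebra `g`: the minimum over all functionals of the
dimension of the kernel of the corresponding Kirillov form. -/
def lieIndex {n : ℕ} (g : Submodule ℂ (M n)) : ℕ :=
  sInf {d : ℕ | ∃ F : M n →ₗ[ℂ] ℂ, d = Module.finrank ℂ ↥(kirKer g F)}

/-- The underlying undirected graph of the directed graph `Γ_{F_S}`. -/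
def gammaGraph {n : ℕ} (S : Finset (Fin n × Fin n)) : SimpleGraph (Fin n) where
  Adj p q := p ≠ q ∧ ((p, q) ∈ S ∨ (q, p) ∈ S)
  symm := ⟨fun p q h => ⟨h.1.symm, h.2.symm⟩⟩
  loopless := ⟨fun p h => h.1 rfl⟩

/-- `F_S` is small: `S` consists of strict relations of the poset and `Γ_{F_S}`
is a spanning tree of the comparability graph. -/
def Small {n : ℕ} (le : Fin n → Fin n → Prop) (S : Finset (Fin n × Fin n)) : Prop :=
  (∀ pq ∈ S, Strict le pq.1 pq.2) ∧ (gammaGraph S).IsTree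

/-- `U_{F_S}(P)`: the sinks of `Γ_{F_S}`. -/
def sinks {n : ℕ} (S : Finset (Fin n × Fin n)) : Set (Fin n) :=
  {p | (∃ q, (q, p) ∈ S) ∧ ∀ q, (p, q) ∉ S}

/-- `D_{F_S}(P)`: the sources of `Γ_{F_S}`. -/
def sources {n : ℕ} (S : Finset (Fin n × Fin n)) : Set (Fin n) :=
  {p | (∃ q, (p, q) ∈ S) ∧ ∀ q, (q, p) ∉ S}

/-- `B_{F_S}(P)`: the vertices of `Γ_{F_S}` that are neither sinks nor sources. -/
def betweens {n : ℕ} (S : Finset (Fin n × Fin n)) : Set (Fin n) :=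
  {p | (∃ q, (p, q) ∈ S) ∧ ∃ q, (q, p) ∈ S}

/-- `U` is a filter (up-closed set) of the poset. -/
def IsPosetFilter {n : ℕ} (le : Fin n → Fin n → Prop) (U : Set (Fin n)) : Prop :=
  ∀ p ∈ U, ∀ q, le p q → q ∈ U

/-- `D` is an order ideal (down-closed set) of the poset. -/
def IsPosetIdeal {n : ℕ} (le : Fin n → Fin n → Prop) (D : Set (Fin n)) : Prop :=
  ∀ p ∈ D, ∀ q, le q p → q ∈ D

/-- Helper to build elements of `Fin n` from natural numbers. -/
def fmk (n : ℕ) (h : 0 < n) (i : ℕ) : Fin n := ⟨i % n, Nat.mod_lt _ h⟩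

/-- Restriction of a matrix along an embedding of index types. -/
def restrictMat {N K : ℕ} (f : Fin K → Fin N) (B : M N) : M K :=
  Matrix.of fun p q => B (f p) (f q)

/-!
Toral posets: finite posets, toral-pairs, the gluing construction rules, and the
inductively defined toral functionals.
-/

/-- A finite poset on `Fin n`. -/
structure FinPoset where
  n : ℕ
  le : Fin n → Fin n → Prop
  le_refl : ∀ p, le p p
  le_antisymm : ∀ p q, le p q → le q p → p = q
  le_trans : ∀ p q r, le p q → le q r → le p r

/-- The strict order of a finite poset. -/
def FinPoset.strict (P : FinPoset) (p q : Fin P.n) : Prop := P.le p q ∧ p ≠ q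

def isMinimal (P : FinPoset) (p : Fin P.n) : Prop := ∀ q, P.le q p → q = p

def isMaximal (P : FinPoset) (p : Fin P.n) : Prop := ∀ q, P.le p q → q = p

/-- `Ext(P)`: the set of minimal and maximal elements of `P`. -/
def extSet (P : FinPoset) : Set (Fin P.n) := {p | isMinimal P p ∨ isMaximal P p}

/-- `Rel_E(P)`: the strict relations between elements of `Ext(P)`. -/
def relE (P : FinPoset) : Set (Fin P.n × Fin P.n) :=
  {pq | pq.1 ∈ extSet P ∧ pq.2 ∈ extSet P ∧ P.strict pq.1 pq.2}

/-- The geometric realization of the order complex `Σ(P)`: convex combinations of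
the standard basis vectors whose support is a chain of `P`. -/
def orderComplexSpace (P : FinPoset) : Set (Fin P.n → ℝ) :=
  {x | (∀ p, 0 ≤ x p) ∧ (∑ p, x p) = 1 ∧
    ∀ p q, x p ≠ 0 → x q ≠ 0 → P.le p q ∨ P.le q p}

/-- A toral-pair `(S, F_S)`: a Frobenius poset together with a Frobenius
functional satisfying (P1)–(P3) and (F1)–(F4).  The extremal elements are
`a, b, c` (with `b = c` in the case `|Ext| = 2`), ordered as `a ≼ b, c` or
`b, c ≼ a`. -/
structure ToralPair where
  P : FinPoset
  S : Finset (Fin P.n × Fin P.n)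
  a : Fin P.n
  b : Fin P.n
  c : Fin P.n
  ext_eq : extSet P = {a, b, c}
  ext_card : (b = c ∧ a ≠ b) ∨ (b ≠ c ∧ a ≠ b ∧ a ≠ c)
  ext_ord : (P.le a b ∧ P.le a c) ∨ (P.le b a ∧ P.le c a)
  S_rel : ∀ pq ∈ S, P.strict pq.1 pq.2
  frob : IsFrobeniusOn (gA P.le) (FS S)
  binary : HasBinarySpectrum (gA P.le)
  contractible : ContractibleSpace ↥(orderComplexSpace P)
  small : (gammaGraph S).IsTree
  filterU : IsPosetFilter P.le (sinks S)
  idealD : IsPosetIdeal P.le (sources S)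
  noB : betweens S = ∅
  gammaExt : ∀ p ∈ extSet P, ∀ q ∈ extSet P, P.strict p q → (p, q) ∈ S
  kerDiag : ∀ B ∈ gFull P.le, (∀ x ∈ gFull P.le, FS S ⁅x, B⁆ = 0) →
    (∀ p q, B p p = B q q) ∧ ∀ p q, p ≠ q → B p q = 0

/-- The twelve construction rules. -/
inductive Rule
  | A1 | A2 | B | C | D1 | D2 | E1 | E2 | F | G1 | G2 | H
deriving DecidableEq

/-- The extremal elements of the toral-pair poset identified by each rule. -/
def identSet (T : ToralPair) : Rule → Set (Fin T.P.n)
  | Rule.A1 => {T.b}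
  | Rule.A2 => {T.c}
  | Rule.C => {T.a}
  | Rule.B => {T.b, T.c}
  | Rule.D1 => {T.a, T.b}
  | Rule.E1 => {T.a, T.b}
  | Rule.D2 => {T.a, T.c}
  | Rule.E2 => {T.a, T.c}
  | _ => {T.a, T.b, T.c}

/-- Comparability in `Q` of two elements of `Q'` lying in the image of `Q`. -/
def cmpVia (Q Q' : FinPoset) (iota : Fin Q.n → Fin Q'.n) (v w : Fin Q'.n) : Prop :=
  ∃ p q, iota p = v ∧ iota q = w ∧ (Q.le p q ∨ Q.le q p)

/-- The side conditions of each construction rule: arity (three extremal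
elements where required) and the comparability/incomparability requirements in
`Q` of the identified elements. -/
def ruleCond (T : ToralPair) (Q Q' : FinPoset) (iota : Fin Q.n → Fin Q'.n)
    (kappa : Fin T.P.n → Fin Q'.n) : Rule → Prop
  | Rule.A1 => True
  | Rule.C => True
  | Rule.E1 => ¬ cmpVia Q Q' iota (kappa T.a) (kappa T.b)
  | Rule.A2 => T.b ≠ T.c
  | Rule.B => T.b ≠ T.c
  | Rule.D1 => T.b ≠ T.c ∧ cmpVia Q Q' iota (kappa T.a) (kappa T.b)
  | Rule.D2 => T.b ≠ T.c ∧ cmpVia Q Q' iota (kappa T.a) (kappa T.c)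
  | Rule.E2 => T.b ≠ T.c ∧ ¬ cmpVia Q Q' iota (kappa T.a) (kappa T.c)
  | Rule.F => T.b ≠ T.c ∧ cmpVia Q Q' iota (kappa T.a) (kappa T.b) ∧
      cmpVia Q Q' iota (kappa T.a) (kappa T.c)
  | Rule.G1 => T.b ≠ T.c ∧ cmpVia Q Q' iota (kappa T.a) (kappa T.b) ∧
      ¬ cmpVia Q Q' iota (kappa T.a) (kappa T.c)
  | Rule.G2 => T.b ≠ T.c ∧ ¬ cmpVia Q Q' iota (kappa T.a) (kappa T.b) ∧
      cmpVia Q Q' iota (kappa T.a) (kappa T.c)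
  | Rule.H => T.b ≠ T.c ∧ ¬ cmpVia Q Q' iota (kappa T.a) (kappa T.b) ∧
      ¬ cmpVia Q Q' iota (kappa T.a) (kappa T.c)

/-- Witness that `Q'` is formed from `Q` and the toral-pair poset `T.P` by
applying rule `r`: order embeddings of `Q` and `T.P` into `Q'` which jointly
cover `Q'`, induce all of its relations, overlap exactly in the identified
extremal elements (minimal with minimal, maximal with maximal), and satisfy the
side conditions of `r`. -/
structure Glue (T : ToralPair) (Q Q' : FinPoset) (r : Rule) where
  iota : Fin Q.n → Fin Q'.n
  kappa : Fin T.P.n → Fin Q'.n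
  iota_ord : ∀ p q, Q.le p q ↔ Q'.le (iota p) (iota q)
  kappa_ord : ∀ p q, T.P.le p q ↔ Q'.le (kappa p) (kappa q)
  cover : ∀ v, v ∈ Set.range iota ∪ Set.range kappa
  separated : ∀ v w, Q'.le v w →
    (v ∈ Set.range iota ∧ w ∈ Set.range iota) ∨
    (v ∈ Set.range kappa ∧ w ∈ Set.range kappa)
  overlap : Set.range iota ∩ Set.range kappa = kappa '' identSet T r
  ext_match : ∀ s ∈ identSet T r, ∀ p, iota p = kappa s →
    (isMinimal T.P s → isMinimal Q p) ∧ (isMaximal T.P s → isMaximal Q p)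
  cond : ruleCond T Q Q' iota kappa r

/-- `P` is a toral poset: it admits a construction sequence
`S₁ = Q₁ ⊂ Q₂ ⊂ ⋯ ⊂ Q_n = P` built from toral-pairs by the construction rules. -/
def IsToral (P : FinPoset) : Prop :=
  ∃ (m : ℕ) (T : Fin (m + 1) → ToralPair) (Q : Fin (m + 1) → FinPoset)
    (r : Fin (m + 1) → Rule),
    Q 0 = (T 0).P ∧ Q (Fin.last m) = P ∧
    ∀ i : Fin m, Nonempty (Glue (T i.succ) (Q i.castSucc) (Q i.succ) (r i.succ))

/-- The rules in `{A1, A2, C, D1, D2, F}`. -/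
def goodRule (r : Rule) : Prop :=
  r = Rule.A1 ∨ r = Rule.A2 ∨ r = Rule.C ∨ r = Rule.D1 ∨ r = Rule.D2 ∨ r = Rule.F

/-- `P` is a Frobenius, toral poset: toral, with a construction sequence using
only rules from `{A1, A2, C, D1, D2, F}`. -/
def IsFrobeniusToral (P : FinPoset) : Prop :=
  ∃ (m : ℕ) (T : Fin (m + 1) → ToralPair) (Q : Fin (m + 1) → FinPoset)
    (r : Fin (m + 1) → Rule),
    Q 0 = (T 0).P ∧ Q (Fin.last m) = P ∧
    (∀ i : Fin m, goodRule (r i.succ)) ∧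
    ∀ i : Fin m, Nonempty (Glue (T i.succ) (Q i.castSucc) (Q i.succ) (r i.succ))

/-- The toral-pair poset has a unique minimal element (`a ≼ b, c`). -/
def minCase (T : ToralPair) : Prop := T.P.le T.a T.b ∧ T.P.le T.a T.c

/-- The toral-pair poset has a unique maximal element (`b, c ≼ a`). -/
def maxCase (T : ToralPair) : Prop := T.P.le T.b T.a ∧ T.P.le T.c T.a

/-- The summands removed from `F_{Q_{i-1}} + F_{S_i}` in the definition of the
toral functional, according to the rule used. -/
def removedSet (T : ToralPair) {N : ℕ} (kappa : Fin T.P.n → Fin N) :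
    Rule → Set (Fin N × Fin N)
  | Rule.D1 => {pq | (minCase T ∧ pq = (kappa T.a, kappa T.b)) ∨
      (maxCase T ∧ pq = (kappa T.b, kappa T.a))}
  | Rule.D2 => {pq | (minCase T ∧ pq = (kappa T.a, kappa T.c)) ∨
      (maxCase T ∧ pq = (kappa T.c, kappa T.a))}
  | Rule.F => {pq | (minCase T ∧ (pq = (kappa T.a, kappa T.b) ∨ pq = (kappa T.a, kappa T.c))) ∨
      (maxCase T ∧ (pq = (kappa T.b, kappa T.a) ∨ pq = (kappa T.c, kappa T.a)))}
  | _ => ∅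

/-- Pushforward of a set of pairs along a map of index types. -/
def pairMap {N K : ℕ} (f : Fin N → Fin K) (s : Finset (Fin N × Fin N)) :
    Finset (Fin K × Fin K) :=
  s.image fun pq => (f pq.1, f pq.2)

/-- One step of the inductive definition of the toral functional:
`F_{Q_i} = F_{Q_{i-1}} + F_{S_i}` minus the removed summands, expressed on the
defining index sets. -/
def ToralFunStep (T : ToralPair) (Q Q' : FinPoset) (r : Rule) (g : Glue T Q Q' r)
    (s : Finset (Fin Q.n × Fin Q.n)) (s' : Finset (Fin Q'.n × Fin Q'.n)) : Prop :=
  (↑s' : Set (Fin Q'.n × Fin Q'.n)) =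
    ((↑(pairMap g.iota s) : Set (Fin Q'.n × Fin Q'.n)) ∪ ↑(pairMap g.kappa T.S)) \
      removedSet T g.kappa r

/-!
Pairing the hypotheses with weights `φ p` shows `F_P ⁅diag φ, B⁆ = ∑_{(p,q)} (φ p - φ q) B p q = 0`
for every `φ`. So `B` vanishes on a summand `(p, q)` as soon as some potential `φ` jumps by one
along `(p, q)` and is flat along all other summands: a *cut potential*. In a toral pair `Γ_F` is a
tree, and the indicator of one side of the edge `(p, q)` is such a potential. Cut potentials
survive each gluing step with rules `A1, A2, C, D1, D2, F`: the removed edges form a star joining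
the identified extremal elements, so cut potentials of kept edges are constant on them, while
arbitrary values on them can be realised by potentials flat along the kept edges; potentials on
the two pieces then paste together.
-/

lemma apply_eq_apply_of_sym2_eq {α β : Type*} {f : α → β} {x y a j : α} (hf : f x = f y)
    (h : s(x, y) = s(a, j)) : f a = f j := by
  rcases Sym2.eq_iff.mp h with ⟨rfl, rfl⟩ | ⟨rfl, rfl⟩
  exacts [hf, hf.symm]

section CutPotential

variable {V R : Type*} [Ring R]

structure IsCutPotential (S : Set (V × V)) (e : V × V) (φ : V → R) : Prop where
  flat : ∀ g ∈ S, g ≠ e → φ g.1 = φ g.2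
  jump : φ e.2 - φ e.1 = 1

namespace IsCutPotential

variable {S S' : Set (V × V)} {e : V × V} {φ : V → R}

lemma mono (h : IsCutPotential S' e φ) (hS : S ⊆ S') : IsCutPotential S e φ :=
  ⟨fun g hg => h.flat g (hS hg), h.jump⟩

lemma exists_separator (h : IsCutPotential S e φ) {a j : V} (hj : s(e.1, e.2) = s(a, j)) :
    ∃ ρ : V → R, ρ a = 0 ∧ ρ j = 1 ∧ ∀ g ∈ S, g ≠ e → ρ g.1 = ρ g.2 := by
  rcases Sym2.eq_iff.mp hj with ⟨rfl, rfl⟩ | ⟨rfl, rfl⟩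
  · exact ⟨fun v => φ v - φ e.1, sub_self _, h.jump,
      fun g hg hne => by simp only [h.flat g hg hne]⟩
  · exact ⟨fun v => φ e.2 - φ v, sub_self _, h.jump,
      fun g hg hne => by simp only [h.flat g hg hne]⟩

end IsCutPotential

lemma exists_isCutPotential_of_isAcyclic {n : ℕ} {S : Finset (Fin n × Fin n)}
    (hS : (gammaGraph S).IsAcyclic) {e : Fin n × Fin n} (he : e ∈ S) (hne : e.1 ≠ e.2)
    (hanti : (e.2, e.1) ∉ S) : ∃ φ : Fin n → R, IsCutPotential ↑S e φ := by
  classical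
  set G := (gammaGraph S).deleteEdges {s(e.1, e.2)}
  have hbridge : ¬ G.Reachable e.1 e.2 :=
    SimpleGraph.isAcyclic_iff_forall_adj_isBridge.mp hS ⟨hne, Or.inl he⟩
  refine ⟨fun v => if G.connectedComponentMk v = G.connectedComponentMk e.2 then 1 else 0,
    fun g hg hge => ?_, ?_⟩
  · rcases eq_or_ne g.1 g.2 with hloop | hloop
    · rw [hloop]
    have hadj : G.Adj g.1 g.2 := by
      refine SimpleGraph.deleteEdges_adj.mpr ⟨⟨hloop, Or.inl hg⟩, fun h => ?_⟩
      rcases Sym2.eq_iff.mp (Set.mem_singleton_iff.mp h) with ⟨h1, h2⟩ | ⟨h1, h2⟩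
      · exact hge (Prod.ext h1 h2)
      · exact hanti (by rwa [← h1, ← h2])
    simp only [SimpleGraph.ConnectedComponent.connectedComponentMk_eq_of_adj hadj]
  · have : G.connectedComponentMk e.1 ≠ G.connectedComponentMk e.2 :=
      fun h => hbridge (SimpleGraph.ConnectedComponent.exact h)
    simp [this]

end CutPotential

section Gluing

open Function

variable {X Y Z R : Type*}

lemma exists_extend_of_compatible [Zero R] {ι : X → Z} {κ : Y → Z} (hι : Injective ι)
    (hκ : Injective κ) (φ : X → R) (θ : Y → R) (h : ∀ x y, ι x = κ y → φ x = θ y) :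
    ∃ ψ : Z → R, (∀ x, ψ (ι x) = φ x) ∧ ∀ y, ψ (κ y) = θ y := by
  refine ⟨extend ι φ (extend κ θ 0), hι.extend_apply φ _, fun y => ?_⟩
  by_cases hy : ∃ x, ι x = κ y
  · obtain ⟨x, hx⟩ := hy
    rw [← hx, hι.extend_apply, h x y hx]
  · rw [extend_apply' _ _ _ hy, hκ.extend_apply]

variable [Ring R] {ι : X → Z} {κ : Y → Z} {I : Set Y} {s : Set (X × X)} {K : Set (Y × Y)}

/-- `Y` is glued onto `X` along `I`, keeping only the edges `K` of `Y`. The hypotheses on `K` say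
that no kept edge separates two points of `I` and no chain of kept edges connects two of them. -/
theorem exists_isCutPotential_of_glue (hι : Injective ι) (hκ : Injective κ)
    (hI : ∀ x y, ι x = κ y → y ∈ I)
    (hs : ∀ e ∈ s, ∃ φ : X → R, IsCutPotential s e φ)
    (hKcut : ∀ f ∈ K, ∃ ψ : Y → R, IsCutPotential K f ψ ∧ ∃ c, ∀ t ∈ I, ψ t = c)
    (hKext : ∀ v : Y → R, ∃ θ : Y → R, (∀ u ∈ K, θ u.1 = θ u.2) ∧ ∀ t ∈ I, θ t = v t)
    {e : Z × Z} (he : e ∈ Prod.map ι ι '' s ∪ Prod.map κ κ '' K) :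
    ∃ φ : Z → R, IsCutPotential (Prod.map ι ι '' s ∪ Prod.map κ κ '' K) e φ := by
  rcases he with ⟨e, he, rfl⟩ | ⟨f, hf, rfl⟩
  · obtain ⟨φ, hφ⟩ := hs e he
    obtain ⟨θ, hθK, hθI⟩ := hKext fun y => extend ι φ 0 (κ y)
    obtain ⟨ψ, hψι, hψκ⟩ := exists_extend_of_compatible hι hκ φ θ fun x y hxy => by
      rw [hθI y (hI x y hxy), ← hxy, hι.extend_apply]
    refine ⟨ψ, ?_, by simpa [hψι] using hφ.jump⟩
    rintro _ (⟨g, hg, rfl⟩ | ⟨u, hu, rfl⟩) hne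
    · simpa [hψι] using hφ.flat g hg fun h => hne (h ▸ rfl)
    · simpa [hψκ] using hθK u hu
  · obtain ⟨θ, hθ, c, hc⟩ := hKcut f hf
    obtain ⟨ψ, hψι, hψκ⟩ := exists_extend_of_compatible hι hκ (fun _ => c) θ fun x y hxy =>
      (hc y (hI x y hxy)).symm
    refine ⟨ψ, ?_, by simpa [hψκ] using hθ.jump⟩
    rintro _ (⟨g, hg, rfl⟩ | ⟨u, hu, rfl⟩) hne
    · simp [hψι]
    · simpa [hψκ] using hθ.flat u hu fun h => hne (h ▸ rfl)

end Gluing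

section Star

variable {Y R : Type*} [Ring R] {S K : Set (Y × Y)} {a : Y} {J : Finset Y}

def IsRemovedStar (S K : Set (Y × Y)) (a : Y) (J : Finset Y) : Prop :=
  ∀ j ∈ J, ∃ ε ∈ S, ε ∉ K ∧ s(ε.1, ε.2) = s(a, j)

lemma IsCutPotential.eq_of_isRemovedStar {f : Y × Y} {ψ : Y → R}
    (hψ : IsCutPotential S f ψ) (hf : f ∈ K) (hJ : IsRemovedStar S K a J) {j : Y} (hj : j ∈ J) :
    ψ j = ψ a := by
  obtain ⟨ε, hεS, hεK, hε⟩ := hJ j hj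
  exact (apply_eq_apply_of_sym2_eq (hψ.flat ε hεS fun h => hεK (h ▸ hf)) hε).symm

lemma exists_flat_eqOn_of_isRemovedStar [DecidableEq Y]
    (hS : ∀ ε ∈ S, ∃ ψ : Y → R, IsCutPotential S ε ψ) (hKS : K ⊆ S) (hJ : IsRemovedStar S K a J)
    (v : Y → R) :
    ∃ θ : Y → R, (∀ u ∈ K, θ u.1 = θ u.2) ∧ ∀ t ∈ insert a (J : Set Y), θ t = v t := by
  induction J using Finset.induction_on with
  | empty => exact ⟨fun _ => v a, fun _ _ => rfl, by simp⟩
  | insert k J hk ih =>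
    obtain ⟨θ, hθK, hθJ⟩ := ih fun j hj => hJ j (Finset.mem_insert_of_mem hj)
    obtain ⟨ε, hεS, hεK, hε⟩ := hJ k (Finset.mem_insert_self k J)
    obtain ⟨ψ, hψ⟩ := hS ε hεS
    obtain ⟨ρ, hρa, hρk, hρ⟩ := hψ.exists_separator hε
    have hρJ : ∀ j ∈ J, ρ j = 0 := fun j hj => by
      obtain ⟨δ, hδS, -, hδ⟩ := hJ j (Finset.mem_insert_of_mem hj)
      have hδε : δ ≠ ε := by
        rintro rfl
        exact hk (Sym2.congr_right.mp (hδ.symm.trans hε) ▸ hj)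
      rw [← apply_eq_apply_of_sym2_eq (hρ δ hδS hδε) hδ, hρa]
    refine ⟨fun t => θ t + (v k - θ k) * ρ t, fun u hu => ?_, ?_⟩
    · simp only [hθK u hu, hρ u (hKS hu) fun h => hεK (h ▸ hu)]
    · intro t ht
      rw [Finset.coe_insert] at ht
      rcases ht with rfl | rfl | ht
      · simp [hθJ t (Set.mem_insert t _), hρa]
      · simp [hρk]
      · simp [hθJ t (Set.mem_insert_of_mem _ ht), hρJ t ht]

end Star

namespace ToralPair

variable (T : ToralPair)

lemma exists_isCutPotential {R : Type*} [Ring R] {f : Fin T.P.n × Fin T.P.n} (hf : f ∈ T.S) :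
    ∃ ψ : Fin T.P.n → R, IsCutPotential ↑T.S f ψ :=
  exists_isCutPotential_of_isAcyclic T.small.isAcyclic hf (T.S_rel f hf).2 fun h =>
    (T.S_rel f hf).2 (T.P.le_antisymm _ _ (T.S_rel f hf).1 (T.S_rel _ h).1)

lemma a_ne_b : T.a ≠ T.b := by
  rcases T.ext_card with ⟨-, h⟩ | ⟨-, h, -⟩ <;> exact h

lemma a_ne_c : T.a ≠ T.c := by
  rcases T.ext_card with ⟨h, h'⟩ | ⟨-, -, h⟩
  exacts [h ▸ h', h]

lemma exists_edge_to_a {j : Fin T.P.n} (hj : j = T.b ∨ j = T.c) :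
    ∃ ε ∈ T.S, (minCase T ∧ ε = (T.a, j)) ∨ (maxCase T ∧ ε = (j, T.a)) := by
  have hext : ∀ x ∈ ({T.a, T.b, T.c} : Set (Fin T.P.n)), x ∈ extSet T.P := fun x hx =>
    T.ext_eq ▸ hx
  have haj : T.a ≠ j := by
    rcases hj with rfl | rfl
    exacts [T.a_ne_b, T.a_ne_c]
  have hja : j ∈ extSet T.P := hext j (by rcases hj with rfl | rfl <;> simp)
  have hae : T.a ∈ extSet T.P := hext T.a (by simp)
  rcases T.ext_ord with hmin | hmax
  · refine ⟨_, T.gammaExt _ hae _ hja ⟨?_, haj⟩, Or.inl ⟨hmin, rfl⟩⟩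
    rcases hj with rfl | rfl
    exacts [hmin.1, hmin.2]
  · refine ⟨_, T.gammaExt _ hja _ hae ⟨?_, haj.symm⟩, Or.inr ⟨hmax, rfl⟩⟩
    rcases hj with rfl | rfl
    exacts [hmax.1, hmax.2]

end ToralPair

lemma ToralPair.exists_isCutPotential_of_heq {R : Type*} [Ring R] {P : FinPoset} {T : ToralPair}
    (hP : P = T.P) {s : Finset (Fin P.n × Fin P.n)} (hs : HEq s T.S) {e : Fin P.n × Fin P.n}
    (he : e ∈ s) : ∃ φ : Fin P.n → R, IsCutPotential ↑s e φ := by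
  subst hP
  obtain rfl := eq_of_heq hs
  exact T.exists_isCutPotential he

def keptEdges (T : ToralPair) {N : ℕ} (κ : Fin T.P.n → Fin N) (r : Rule) :
    Set (Fin T.P.n × Fin T.P.n) :=
  {u | u ∈ T.S ∧ (κ u.1, κ u.2) ∉ removedSet T κ r}

lemma isRemovedStar_of_mem_removedSet (T : ToralPair) {N : ℕ} (κ : Fin T.P.n → Fin N)
    {r : Rule} {J : Finset (Fin T.P.n)} (hJ : ∀ j ∈ J, j = T.b ∨ j = T.c)
    (hrem : ∀ j ∈ J, (minCase T → (κ T.a, κ j) ∈ removedSet T κ r) ∧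
      (maxCase T → (κ j, κ T.a) ∈ removedSet T κ r)) :
    IsRemovedStar ↑T.S (keptEdges T κ r) T.a J := by
  intro j hj
  obtain ⟨ε, hε, ⟨hm, rfl⟩ | ⟨hm, rfl⟩⟩ := T.exists_edge_to_a (hJ j hj)
  · exact ⟨_, hε, fun h => h.2 ((hrem j hj).1 hm), rfl⟩
  · exact ⟨_, hε, fun h => h.2 ((hrem j hj).2 hm), Sym2.eq_swap⟩

lemma exists_identSet_eq_isRemovedStar (T : ToralPair) {N : ℕ} (κ : Fin T.P.n → Fin N)
    {r : Rule} (hr : goodRule r) :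
    ∃ (a : Fin T.P.n) (J : Finset (Fin T.P.n)),
      identSet T r = insert a ↑J ∧ IsRemovedStar ↑T.S (keptEdges T κ r) a J := by
  rcases hr with rfl | rfl | rfl | rfl | rfl | rfl
  · exact ⟨T.b, ∅, by simp [identSet], by simp [IsRemovedStar]⟩
  · exact ⟨T.c, ∅, by simp [identSet], by simp [IsRemovedStar]⟩
  · exact ⟨T.a, ∅, by simp [identSet], by simp [IsRemovedStar]⟩
  · exact ⟨T.a, {T.b}, by simp [identSet], isRemovedStar_of_mem_removedSet T κ (by simp)
      (by simp +contextual [removedSet])⟩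
  · exact ⟨T.a, {T.c}, by simp [identSet], isRemovedStar_of_mem_removedSet T κ (by simp)
      (by simp +contextual [removedSet])⟩
  · exact ⟨T.a, {T.b, T.c}, by simp [identSet], isRemovedStar_of_mem_removedSet T κ (by simp)
      (by simp +contextual [removedSet])⟩

lemma FinPoset.injective_of_le_iff {Q Q' : FinPoset} {f : Fin Q.n → Fin Q'.n}
    (hf : ∀ p q, Q.le p q ↔ Q'.le (f p) (f q)) : Function.Injective f := fun p q h =>
  Q.le_antisymm p q ((hf p q).mpr (h ▸ Q'.le_refl _)) ((hf q p).mpr (h ▸ Q'.le_refl _))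

namespace Glue

variable {T : ToralPair} {Q Q' : FinPoset} {r : Rule} (g : Glue T Q Q' r)

lemma iota_injective : Function.Injective g.iota := FinPoset.injective_of_le_iff g.iota_ord

lemma kappa_injective : Function.Injective g.kappa := FinPoset.injective_of_le_iff g.kappa_ord

lemma mem_identSet_of_iota_eq_kappa {x : Fin Q.n} {y : Fin T.P.n} (h : g.iota x = g.kappa y) :
    y ∈ identSet T r := by
  obtain ⟨t, ht, hty⟩ := g.overlap.subset ⟨⟨x, h⟩, ⟨y, rfl⟩⟩
  rwa [← g.kappa_injective hty]

end Glue

theorem exists_isCutPotential_of_toralFunStep {R : Type*} [Ring R] {T : ToralPair}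
    {Q Q' : FinPoset} {r : Rule} (hr : goodRule r) (g : Glue T Q Q' r)
    {s : Finset (Fin Q.n × Fin Q.n)} {s' : Finset (Fin Q'.n × Fin Q'.n)}
    (hst : ToralFunStep T Q Q' r g s s') (hs : ∀ e ∈ s, ∃ φ : Fin Q.n → R, IsCutPotential ↑s e φ)
    {e : Fin Q'.n × Fin Q'.n} (he : e ∈ s') : ∃ φ : Fin Q'.n → R, IsCutPotential ↑s' e φ := by
  obtain ⟨a, J, hI, hJ⟩ := exists_identSet_eq_isRemovedStar T g.kappa hr
  have hKS : keptEdges T g.kappa r ⊆ ↑T.S := fun u hu => hu.1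
  have hsub : (↑s' : Set (Fin Q'.n × Fin Q'.n)) ⊆
      Prod.map g.iota g.iota '' ↑s ∪ Prod.map g.kappa g.kappa '' keptEdges T g.kappa r := by
    rw [hst]
    rintro x ⟨hx | hx, hxr⟩
    · obtain ⟨p, hp, rfl⟩ := Finset.mem_image.mp hx
      exact Or.inl ⟨p, hp, rfl⟩
    · obtain ⟨u, hu, rfl⟩ := Finset.mem_image.mp hx
      exact Or.inr ⟨u, ⟨hu, hxr⟩, rfl⟩
  have hKcut : ∀ f ∈ keptEdges T g.kappa r, ∃ ψ : Fin T.P.n → R,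
      IsCutPotential (keptEdges T g.kappa r) f ψ ∧ ∃ c, ∀ t ∈ identSet T r, ψ t = c := by
    intro f hf
    obtain ⟨ψ, hψ⟩ := T.exists_isCutPotential (R := R) hf.1
    refine ⟨ψ, hψ.mono hKS, ψ a, ?_⟩
    rw [hI]
    rintro t (rfl | ht)
    exacts [rfl, hψ.eq_of_isRemovedStar hf hJ ht]
  obtain ⟨φ, hφ⟩ := exists_isCutPotential_of_glue g.iota_injective g.kappa_injective
    (fun _ _ => g.mem_identSet_of_iota_eq_kappa) hs hKcut
    (fun v => hI ▸ exists_flat_eqOn_of_isRemovedStar (fun _ => T.exists_isCutPotential) hKS hJ v)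
    (hsub he)
  exact ⟨φ, hφ.mono hsub⟩

section KirillovForm

variable {n : ℕ} {S : Finset (Fin n × Fin n)} {B : M n}

lemma FS_lie_diagonal (S : Finset (Fin n × Fin n)) (φ : Fin n → ℂ) (B : M n) :
    FS S ⁅Matrix.diagonal φ, B⁆ = ∑ g ∈ S, (φ g.1 - φ g.2) * B g.1 g.2 := by
  simp only [FS, LinearMap.coe_mk, AddHom.coe_mk, Ring.lie_def, Matrix.sub_apply,
    Matrix.diagonal_mul, Matrix.mul_diagonal]
  exact Finset.sum_congr rfl fun g _ => by ring

lemma FS_lie_diagonal_eq_zero (hB : ∀ p : Fin n, FS S ⁅Matrix.single p p (1 : ℂ), B⁆ = 0)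
    (φ : Fin n → ℂ) : FS S ⁅Matrix.diagonal φ, B⁆ = 0 := by
  rw [← Matrix.sum_single_eq_diagonal, Ring.lie_def, Finset.sum_mul, Finset.mul_sum,
    ← Finset.sum_sub_distrib, map_sum]
  refine Finset.sum_eq_zero fun p _ => ?_
  rw [show Matrix.single p p (φ p) = φ p • Matrix.single p p 1 by simp [Matrix.smul_single],
    smul_mul_assoc, mul_smul_comm, ← smul_sub, map_smul, ← Ring.lie_def, hB, smul_zero]

theorem entry_eq_zero_of_isCutPotential
    (hB : ∀ p : Fin n, FS S ⁅Matrix.single p p (1 : ℂ), B⁆ = 0) {e : Fin n × Fin n}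
    (he : e ∈ S) {φ : Fin n → ℂ} (hφ : IsCutPotential ↑S e φ) :
    B e.1 e.2 = 0 := by
  have h := FS_lie_diagonal_eq_zero hB φ
  rw [FS_lie_diagonal, Finset.sum_eq_single_of_mem e he fun g hg hge => by
    rw [hφ.flat g hg hge, sub_self, zero_mul]] at h
  linear_combination -h - B e.1 e.2 * hφ.jump

end KirillovForm

/-- for a Frobenius toral poset `P = Q_n` with toral functional
`F_P`, if `B ∈ g(P)` satisfies `F_P(⁅E_{p,p}, B⁆) = 0` for all `p ∈ P`, then
`E*_{p,q}(B) = 0` for every summand `E*_{p,q}` of `F_P`. -/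
theorem toral_functional_summands_vanish
    (m : ℕ) (T : Fin (m + 1) → ToralPair)
    (Q : Fin (m + 1) → FinPoset) (r : Fin (m + 1) → Rule)
    (hgood : ∀ i : Fin m, goodRule (r i.succ))
    (g : ∀ i : Fin m, Glue (T i.succ) (Q i.castSucc) (Q i.succ) (r i.succ))
    (h0 : Q 0 = (T 0).P)
    (SQ : ∀ i : Fin (m + 1), Finset (Fin (Q i).n × Fin (Q i).n))
    (hSQ0 : HEq (SQ 0) (T 0).S)
    (hstep : ∀ i : Fin m,
      ToralFunStep (T i.succ) (Q i.castSucc) (Q i.succ) (r i.succ) (g i)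
        (SQ i.castSucc) (SQ i.succ)) :
    ∀ B ∈ gFull (Q (Fin.last m)).le,
      (∀ p : Fin (Q (Fin.last m)).n,
        FS (SQ (Fin.last m)) ⁅Matrix.single p p (1 : ℂ), B⁆ = 0) →
      ∀ pq ∈ SQ (Fin.last m), B pq.1 pq.2 = 0 := by
  have hcut : ∀ i, ∀ e ∈ SQ i, ∃ φ : Fin (Q i).n → ℂ, IsCutPotential ↑(SQ i) e φ := by
    intro i
    induction i using Fin.induction with
    | zero => exact fun e => ToralPair.exists_isCutPotential_of_heq h0 hSQ0
    | succ i ih =>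
      exact fun e => exists_isCutPotential_of_toralFunStep (hgood i) (g i) (hstep i) ih
  intro B _ hB e he
  obtain ⟨φ, hφ⟩ := hcut (Fin.last m) e he
  exact entry_eq_zero_of_isCutPotential hB he hφ

end
end LiePosets
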